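/- If the vector g lies in the common nullspace of all matrices Z_0 + Z_1 + ... + Z_{k_0} and Z_∞, and k_0 ≥ 1, then the eigenvalue 1 of the companion matrix Q has a Jordan block of size at least 2; equivalently, the geometric multiplicity of the eigenvalue 1 is strictly less than its algebraic multiplicity (for g ≠ 0). -/

import Mathlib

/-!
Write `u = (g, …, g)` and `e = (0, …, 0, g)` in block form. Since `Q_∞ g = 0` and
`(Q_1 + ⋯ + Q_{k_0} + Q_∞) g = g - Z_0⁻¹ (Z_0 + ⋯ + Z_{k_0} + Z_∞) g = g`, one computes
`Q u = u + e` and `Q e = e`: `(u, e)` is a Jordan chain of length two for the eigenvalue `1`.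
So `u` lies in the maximal generalized eigenspace but not in the eigenspace, and the dimension of
the former is the algebraic multiplicity.
-/

open Matrix

/-- Block companion matrix: first block row `(Qk 0, ..., Qk (k0-1), Qinf)`,
identity blocks on the subdiagonal, and last block row `(0, ..., 0, I, I)`. -/
def companion (n k0 : ℕ) (Qk : Fin k0 → Matrix (Fin n) (Fin n) ℂ)
    (Qinf : Matrix (Fin n) (Fin n) ℂ) :
    Matrix (Fin (k0 + 1) × Fin n) (Fin (k0 + 1) × Fin n) ℂ :=
  fun p q =>
    if p.1.val = 0 then
      if h : q.1.val < k0 then Qk ⟨q.1.val, h⟩ p.2 q.2 else Qinf p.2 q.2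
    else
      (if q.1.val + 1 = p.1.val then (1 : Matrix (Fin n) (Fin n) ℂ) p.2 q.2 else 0)
        + (if p.1.val = k0 ∧ q.1.val = k0 then (1 : Matrix (Fin n) (Fin n) ℂ) p.2 q.2 else 0)

lemma Module.End.finrank_eigenspace_lt_rootMultiplicity_of_jordanChain {K M : Type*} [Field K]
    [AddCommGroup M] [Module K M] [FiniteDimensional K M] (f : Module.End K M) {μ : K} {u v : M}
    (hu : f u = μ • u + v) (hv : f v = μ • v) (hv0 : v ≠ 0) :
    Module.finrank K (f.eigenspace μ) < f.charpoly.rootMultiplicity μ := by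
  rw [← LinearMap.finrank_maxGenEigenspace_eq]
  refine Submodule.finrank_lt_finrank_of_lt
    (SetLike.lt_iff_le_and_exists.mpr ⟨eigenspace_le_maxGenEigenspace, u, ?_, ?_⟩)
  · refine (mem_maxGenEigenspace f μ u).mpr ⟨2, ?_⟩
    simp [pow_two, hu, hv]
  · rw [mem_eigenspace_iff, hu]
    simpa using hv0

section Companion

variable {n k0 : ℕ} (Qk : Fin k0 → Matrix (Fin n) (Fin n) ℂ) (Qinf : Matrix (Fin n) (Fin n) ℂ)

lemma companion_mulVec_apply_zero (v : Fin (k0 + 1) × Fin n → ℂ) (x : Fin n) :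
    (companion n k0 Qk Qinf *ᵥ v) (0, x) =
      ((∑ j, Qk j *ᵥ fun y => v (j.castSucc, y)) + Qinf *ᵥ fun y => v (Fin.last k0, y)) x := by
  simp [companion, mulVec, dotProduct, Fintype.sum_prod_type, Fin.sum_univ_castSucc]

lemma companion_mulVec_apply_succ (v : Fin (k0 + 1) × Fin n → ℂ) (i : Fin k0) (x : Fin n) :
    (companion n k0 Qk Qinf *ᵥ v) (i.succ, x) =
      v (i.castSucc, x) + if i.succ = Fin.last k0 then v (i.succ, x) else 0 := by
  have hcast (q : Fin (k0 + 1)) : (q : ℕ) = i ↔ q = i.castSucc := by simp [Fin.ext_iff]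
  have hlast (q : Fin (k0 + 1)) : (q : ℕ) = k0 ↔ q = Fin.last k0 := by simp [Fin.ext_iff]
  have hsucc : (i : ℕ) + 1 = k0 ↔ i.succ = Fin.last k0 := by simp [Fin.ext_iff]
  simp only [mulVec, dotProduct, companion, Fin.val_succ, Nat.add_eq_zero_iff, one_ne_zero,
    and_false, ↓reduceIte, Nat.add_right_cancel_iff, hcast, one_apply, hsucc, hlast, ite_and,
    add_mul, ite_mul, one_mul, zero_mul, Finset.sum_add_distrib, Fintype.sum_prod_type,
    Finset.sum_ite_irrel, Finset.sum_ite_eq, Finset.mem_univ, Finset.sum_const_zero,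
    Finset.sum_ite_eq', add_right_inj]
  split_ifs with h <;> simp [h]

lemma companion_mulVec_const (hk0 : k0 ≠ 0) {g : Fin n → ℂ} (hg : (∑ j, Qk j + Qinf) *ᵥ g = g) :
    companion n k0 Qk Qinf *ᵥ (fun p => g p.2) =
      (fun p => g p.2) + fun p => if p.1 = Fin.last k0 then g p.2 else 0 := by
  funext ⟨i, x⟩
  cases i using Fin.cases with
  | zero =>
    rw [companion_mulVec_apply_zero]
    change ((∑ j, Qk j *ᵥ g) + Qinf *ᵥ g) x = _
    rw [← sum_mulVec, ← add_mulVec, hg]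
    simp [hk0]
  | succ i => simp [companion_mulVec_apply_succ]

lemma companion_mulVec_lastBlock (hk0 : k0 ≠ 0) {g : Fin n → ℂ} (hg : Qinf *ᵥ g = 0) :
    companion n k0 Qk Qinf *ᵥ (fun p => if p.1 = Fin.last k0 then g p.2 else 0) =
      fun p => if p.1 = Fin.last k0 then g p.2 else 0 := by
  funext ⟨i, x⟩
  cases i using Fin.cases with
  | zero => simp [companion_mulVec_apply_zero, hg, hk0, ← Pi.zero_def]
  | succ i =>
    rw [companion_mulVec_apply_succ]
    by_cases h : i.succ = Fin.last k0 <;> simp [h]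

end Companion

lemma sum_neg_inv_mul_eq_one_sub_inv_mul {n k0 : ℕ} (Z : ℕ → Matrix (Fin n) (Fin n) ℂ) (Zinf : Matrix (Fin n) (Fin n) ℂ)
    (hZ0 : IsUnit (Z 0).det) :
    ∑ j : Fin k0, -((Z 0)⁻¹ * Z (j.val + 1)) + -((Z 0)⁻¹ * Zinf) =
      1 - (Z 0)⁻¹ * (∑ k ∈ Finset.range (k0 + 1), Z k + Zinf) := by
  rw [Finset.sum_range_succ', mul_add, mul_add, nonsing_inv_mul _ hZ0, Finset.mul_sum,
    ← Fin.sum_univ_eq_sum_range (fun j => (Z 0)⁻¹ * Z (j + 1)), Finset.sum_neg_distrib]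
  abel

/-- If `g ≠ 0` lies in the common nullspace of `Z0 + Z1 + ... + Z_{k0}` and `Zinf`, and
`k0 ≥ 1`, then the eigenvalue `1` of the companion matrix `Q` has a Jordan block of size at
least `2`: the geometric multiplicity of the eigenvalue `1` is strictly smaller than its
algebraic multiplicity. -/
theorem stmt3 (n k0 : ℕ) (hk0 : 1 ≤ k0) (Z : ℕ → Matrix (Fin n) (Fin n) ℂ)
    (Zinf : Matrix (Fin n) (Fin n) ℂ) (hZ0 : IsUnit (Z 0).det)
    (g : Fin n → ℂ) (hg : g ≠ 0)
    (hsum : (∑ k ∈ Finset.range (k0 + 1), Z k) *ᵥ g = 0)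
    (hker : Zinf *ᵥ g = 0) :
    Module.finrank ℂ
        (Module.End.eigenspace
          (Matrix.toLin' (companion n k0 (fun j => -((Z 0)⁻¹ * Z (j.val + 1)))
            (-((Z 0)⁻¹ * Zinf)))) 1)
      < Polynomial.rootMultiplicity (1 : ℂ)
          (Matrix.charpoly (companion n k0 (fun j => -((Z 0)⁻¹ * Z (j.val + 1)))
            (-((Z 0)⁻¹ * Zinf)))) := by
  have hk0' : k0 ≠ 0 := Nat.one_le_iff_ne_zero.mp hk0
  have hrow : (∑ j : Fin k0, -((Z 0)⁻¹ * Z (j.val + 1)) + -((Z 0)⁻¹ * Zinf)) *ᵥ g = g := by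
    rw [sum_neg_inv_mul_eq_one_sub_inv_mul Z Zinf hZ0, sub_mulVec, ← mulVec_mulVec, add_mulVec, hsum, hker]
    simp
  have hQinf : -((Z 0)⁻¹ * Zinf) *ᵥ g = 0 := by
    rw [neg_mulVec, ← mulVec_mulVec, hker, mulVec_zero, neg_zero]
  have hlast : (fun p : Fin (k0 + 1) × Fin n => if p.1 = Fin.last k0 then g p.2 else 0) ≠ 0 :=
    fun h => hg (funext fun x => by simpa using congrFun h (Fin.last k0, x))
  rw [← Matrix.charpoly_toLin']
  refine Module.End.finrank_eigenspace_lt_rootMultiplicity_of_jordanChain _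
    (u := fun p => g p.2) ?_ ?_ hlast
  · rw [toLin'_apply, companion_mulVec_const _ _ hk0' hrow, one_smul]
  · rw [toLin'_apply, companion_mulVec_lastBlock _ _ hk0' hQinf, one_smul]
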